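/- Let G be a group acting on a topological space E, and let W ⊆ E be a G-invariant subset. If H ≤ G is a subgroup with Fix(H) nonempty and Fix(H) ∩ W = ∅, then no G-equivariant spine S ⊆ E (deformation retract via a G-equivariant homotopy) is contained in W. -/
import Mathlib


/-- If `S` is a `G`-equivariant spine of `E` contained in a `G`-invariant set `W`, and
`H ≤ G` has nonempty fixed-point set disjoint from `W`, then we get a contradiction:
no `G`-equivariant spine of `E` can be contained in `W`. -/
theorem stmt_2 {E G : Type*} [TopologicalSpace E] [Group G] [MulAction G E]
    (S W : Set E) (f : E × unitInterval → E)
    (hf_cont : Continuous f)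
    (hf0 : ∀ x : E, f (x, 0) = x)
    (hf1 : ∀ x : E, f (x, 1) ∈ S)
    (hfS : ∀ x ∈ S, ∀ t : unitInterval, f (x, t) = x)
    (hf_equiv : ∀ (g : G) (x : E) (t : unitInterval), f (g • x, t) = g • f (x, t))
    (hSW : S ⊆ W)
    (hW_inv : ∀ (g : G), ∀ x ∈ W, g • x ∈ W)
    (H : Subgroup G)
    (hfix_ne : ({x : E | ∀ h ∈ H, h • x = x} : Set E).Nonempty)
    (hfix_disj : {x : E | ∀ h ∈ H, h • x = x} ∩ W = ∅) :
    False := by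
  obtain ⟨x, hx⟩ := hfix_ne
  have hmem : f (x, 1) ∈ {x : E | ∀ h ∈ H, h • x = x} ∩ W := by
    refine ⟨fun h hh => ?_, hSW (hf1 x)⟩
    rw [← hf_equiv, hx h hh]
  rw [hfix_disj] at hmem
  exact hmem
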